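/- Let F₁, F₂ be as in the N = 2 reduced steady-state system: F₁(a₁,a₂) = (k_0 + k_b a₂)·u(a₁,a₂) − a₁ − 2k_m a₁² + 2k_2 a₂ and F₂(a₁,a₂) = k_m a₁² − k_2 a₂, with u(a₁,a₂) = (1/|Ω|)(M_0 − |Γ|(a₁ + 2a₂)). Then (a₁*, a₂*) with a₁* > 0 satisfies F₁ = F₂ = 0 if and only if a₂* = (k_m/k_2)(a₁*)² and a₁* is a root of P₂(α) = −k_0 M_0 + (|Ω| + k_0|Γ|)α + (k_m/k_2)(2k_0|Γ| − M_0 k_b)α² + k_b|Γ|(k_m/k_2)α³ + 2(k_m/k_2)² k_b|Γ| α⁴. -/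

import Mathlib

/-!
`F₂ = 0` says exactly that `a₂ = (k_m/k_2) a₁²`. On this curve the exchange
terms `-2 k_m a₁² + 2 k_2 a₂` of the monomer balance `F₁` cancel. What remains is
`(k_0 + k_b a₂) u - a₁`, and multiplying it by `-|Ω|` gives exactly `P₂(a₁)`.
-/

section SteadyState

variable {K : Type*} [Field K] (k0 kb km k2 M0 Ω Γ : K)

def monomerBalance (a1 a2 : K) : K :=
  (k0 + kb * a2) * ((1 / Ω) * (M0 - Γ * (a1 + 2 * a2))) - a1 - 2 * km * a1 ^ 2 + 2 * k2 * a2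

def dimerBalance (a1 a2 : K) : K :=
  km * a1 ^ 2 - k2 * a2

def steadyStateQuartic (α : K) : K :=
  -(k0 * M0) + (Ω + k0 * Γ) * α
    + km / k2 * (2 * k0 * Γ - M0 * kb) * α ^ 2
    + kb * Γ * (km / k2) * α ^ 3
    + 2 * (km / k2) ^ 2 * kb * Γ * α ^ 4

variable {k2 Ω}

theorem dimerBalance_eq_zero_iff (hk2 : k2 ≠ 0) (a1 a2 : K) :
    dimerBalance km k2 a1 a2 = 0 ↔ a2 = km / k2 * a1 ^ 2 := by
  rw [dimerBalance, sub_eq_zero, div_mul_eq_mul_div, eq_div_iff hk2, mul_comm a2, eq_comm]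

theorem steadyStateQuartic_eq_neg_mul_monomerBalance (hk2 : k2 ≠ 0) (hΩ : Ω ≠ 0) (a1 : K) :
    steadyStateQuartic k0 kb km k2 M0 Ω Γ a1 =
      -(Ω * monomerBalance k0 kb km k2 M0 Ω Γ a1 (km / k2 * a1 ^ 2)) := by
  unfold monomerBalance steadyStateQuartic
  field_simp
  ring

end SteadyState

theorem stmt_12_general (k0 kb km k2 M0 Ω Γ : ℝ)
    (hk2 : 0 < k2)
    (hΩ : 0 < Ω)
    (a1 a2 : ℝ) :
    ((k0 + kb * a2) * ((1 / Ω) * (M0 - Γ * (a1 + 2 * a2)))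
        - a1 - 2 * km * a1 ^ 2 + 2 * k2 * a2 = 0 ∧
      km * a1 ^ 2 - k2 * a2 = 0)
    ↔
    (a2 = km / k2 * a1 ^ 2 ∧
      -(k0 * M0) + (Ω + k0 * Γ) * a1
        + km / k2 * (2 * k0 * Γ - M0 * kb) * a1 ^ 2
        + kb * Γ * (km / k2) * a1 ^ 3
        + 2 * (km / k2) ^ 2 * kb * Γ * a1 ^ 4 = 0) := by
  change monomerBalance k0 kb km k2 M0 Ω Γ a1 a2 = 0 ∧ dimerBalance km k2 a1 a2 = 0 ↔
    a2 = km / k2 * a1 ^ 2 ∧ steadyStateQuartic k0 kb km k2 M0 Ω Γ a1 = 0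
  rw [and_comm, dimerBalance_eq_zero_iff km hk2.ne']
  refine and_congr_right fun ha2 => ?_
  rw [ha2, steadyStateQuartic_eq_neg_mul_monomerBalance k0 kb km M0 Γ hk2.ne' hΩ.ne',
    neg_eq_zero, mul_eq_zero, or_iff_right hΩ.ne']

theorem stmt_12 (k0 kb km k2 M0 Ω Γ : ℝ)
    (hk0 : 0 < k0) (hkb : 0 < kb) (hkm : 0 < km) (hk2 : 0 < k2)
    (hM0 : 0 < M0) (hΩ : 0 < Ω) (hΓ : 0 < Γ)
    (a1 a2 : ℝ) (ha1 : 0 < a1) :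
    ((k0 + kb * a2) * ((1 / Ω) * (M0 - Γ * (a1 + 2 * a2)))
        - a1 - 2 * km * a1 ^ 2 + 2 * k2 * a2 = 0 ∧
      km * a1 ^ 2 - k2 * a2 = 0)
    ↔
    (a2 = km / k2 * a1 ^ 2 ∧
      -(k0 * M0) + (Ω + k0 * Γ) * a1
        + km / k2 * (2 * k0 * Γ - M0 * kb) * a1 ^ 2
        + kb * Γ * (km / k2) * a1 ^ 3
        + 2 * (km / k2) ^ 2 * kb * Γ * a1 ^ 4 = 0) :=
  stmt_12_general k0 kb km k2 M0 Ω Γ hk2 hΩ a1 a2
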